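/- There exist two computably enumerable sets that are computably inseparable: no computable set contains the first and is disjoint from the second. -/

import Mathlib

/-!
Take `A = {e | φₑ(e) = 0}` and `B = {e | φₑ(e) = 1}`; both are c.e. because the diagonal
`e ↦ φₑ(e)` is partial recursive. If a computable `C` separated them, its indicator would be
`φₑ` for some code `e`, and evaluating at `e` puts `e` on the wrong side of `C`.
-/

open Nat.Partrec (Code)
open Nat.Partrec.Code
open Encodable (encode)

theorem Partrec.mem_re {α σ : Type*} [Primcodable α] [Primcodable σ] [DecidableEq σ]
    {f : α →. σ} (hf : Partrec f) (b : σ) : REPred fun a => b ∈ f a := by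
  have hb : REPred fun m : σ => m = b :=
    (Primrec.eq.comp Primrec.id (Primrec.const b)).computablePred.to_re
  refine (hf.bind (hb.comp Computable.snd).to₂).dom_re.of_eq fun a => ?_
  simp [Part.dom_iff_mem]

theorem Computable.exists_code_eval_eq_some {f : ℕ → ℕ} (hf : Computable f) :
    ∃ c : Code, ∀ n, c.eval n = Part.some (f n) :=
  (exists_code.1 (Partrec.nat_iff.1 hf.partrec)).imp fun _ h n => congrFun h n

def diagonalEval (n : ℕ) : Part ℕ :=
  (Denumerable.ofNat Code n).eval n

theorem partrec_diagonalEval : Partrec diagonalEval :=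
  eval_part.comp (Computable.ofNat Code) Computable.id

theorem diagonalEval_encode (c : Code) : diagonalEval (encode c) = c.eval (encode c) := by
  simp [diagonalEval]

theorem not_exists_computable_separator_diagonalEval :
    ¬ ∃ C : ℕ → Prop, ComputablePred C ∧ (∀ n, 0 ∈ diagonalEval n → C n) ∧
      (∀ n, 1 ∈ diagonalEval n → ¬ C n) := by
  rintro ⟨C, hC, hzero, hone⟩
  obtain ⟨f, hf, rfl⟩ := ComputablePred.computable_iff.1 hC
  obtain ⟨c, hc⟩ := (hf.cond (Computable.const 1) (Computable.const 0)).exists_code_eval_eq_some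
  have hdiag := (diagonalEval_encode c).trans (hc (encode c))
  cases hfc : f (encode c) with
  | false => simpa [hfc] using hzero (encode c) (by simp [hdiag, hfc])
  | true => exact hone (encode c) (by simp [hdiag, hfc]) hfc

theorem exists_computably_inseparable_ce_sets :
    ∃ A B : ℕ → Prop, REPred A ∧ REPred B ∧ (∀ n, ¬ (A n ∧ B n)) ∧
      ¬ ∃ C : ℕ → Prop, ComputablePred C ∧ (∀ n, A n → C n) ∧ (∀ n, B n → ¬ C n) :=
  ⟨fun n => 0 ∈ diagonalEval n, fun n => 1 ∈ diagonalEval n,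
    partrec_diagonalEval.mem_re 0, partrec_diagonalEval.mem_re 1,
    fun _ h => zero_ne_one (Part.mem_unique h.1 h.2),
    not_exists_computable_separator_diagonalEval⟩
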